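/- arXiv:2501.12940 — 2 statements merged into one kernel-verified Lean document; each statement's English description precedes it below -/
import Mathlib

section
/- Let J be a symmetric real 3×3 matrix and Ĵ = (1/2) tr(J) I - J. Then for any ω ∈ R^3, (ω × Jω)^× = (ω^×)² Ĵ - Ĵ (ω^×)². -/
/-!
Both sides are read through their action on vectors. Since `hat w *ᵥ v = w ⨯₃ v`, the triple
product expansions give `hat (a ⨯₃ b) = b aᵀ - a bᵀ` and `(hat ω)² = ω ωᵀ - ‖ω‖² I`. The scalar
parts of `(hat ω)²` and of `Ĵ` drop out of the commutator, leaving `J ω ωᵀ - ω ωᵀ J`, which by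
the symmetry of `J` is `(Jω) ωᵀ - ω (Jω)ᵀ = hat (ω ⨯₃ Jω)`.
-/

open Matrix

def hat (w : Fin 3 → ℝ) : Matrix (Fin 3) (Fin 3) ℝ :=
  !![0, -w 2, w 1; w 2, 0, -w 0; -w 1, w 0, 0]

noncomputable def enorm3 (w : Fin 3 → ℝ) : ℝ := Real.sqrt (w ⬝ᵥ w)

theorem hat_mulVec (w v : Fin 3 → ℝ) : hat w *ᵥ v = w ⨯₃ v := by
  ext i
  fin_cases i <;>
    simp only [hat, cross_apply, mulVec, vec3_dotProduct, of_apply, cons_val', cons_val_fin_one,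
      cons_val_zero, cons_val_one, cons_val, Fin.isValue, Fin.zero_eta, Fin.mk_one,
      Fin.reduceFinMk] <;>
    ring

theorem hat_cross (a b : Fin 3 → ℝ) : hat (a ⨯₃ b) = vecMulVec b a - vecMulVec a b := by
  refine ext_iff_mulVec.2 fun v => ?_
  rw [hat_mulVec, cross_cross_eq_smul_sub_smul, sub_mulVec, vecMulVec_mulVec, vecMulVec_mulVec,
    op_smul_eq_smul, op_smul_eq_smul]

theorem hat_sq (w : Fin 3 → ℝ) : hat w ^ 2 = vecMulVec w w - (w ⬝ᵥ w) • 1 := by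
  refine ext_iff_mulVec.2 fun v => ?_
  rw [sq, ← mulVec_mulVec, hat_mulVec, hat_mulVec, cross_cross_eq_smul_sub_smul', sub_mulVec,
    vecMulVec_mulVec, op_smul_eq_smul, smul_mulVec, one_mulVec]

theorem vecMulVec_mul_of_isSymm {R m n : Type*} [CommSemiring R] [Fintype n]
    (x : m → R) (w : n → R) {J : Matrix n n R} (hJ : J.IsSymm) :
    vecMulVec x w * J = vecMulVec x (J *ᵥ w) := by
  rw [vecMulVec_mul, ← mulVec_transpose, hJ.eq]

theorem commutator_sub_smul_one_smul_one_sub {R A : Type*} [CommRing R] [Ring A] [Algebra R A]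
    (x y : A) (a b : R) :
    (x - a • 1) * (b • 1 - y) - (b • 1 - y) * (x - a • 1) = y * x - x * y := by
  simp only [sub_mul, mul_sub, smul_mul_assoc, mul_smul_comm, one_mul, mul_one, smul_sub,
    smul_smul, mul_comm b a]
  abel

theorem hat_cross_J (J : Matrix (Fin 3) (Fin 3) ℝ) (hJ : Jᵀ = J) (ω : Fin 3 → ℝ) :
    hat (ω ⨯₃ J.mulVec ω) =
      (hat ω) ^ 2 * ((1 / 2 * J.trace) • (1 : Matrix (Fin 3) (Fin 3) ℝ) - J)
        - ((1 / 2 * J.trace) • (1 : Matrix (Fin 3) (Fin 3) ℝ) - J) * (hat ω) ^ 2 := by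
  rw [hat_cross, hat_sq, commutator_sub_smul_one_smul_one_sub, mul_vecMulVec,
    vecMulVec_mul_of_isSymm _ _ hJ]
end

section
/- For ω ∈ R^3 with ω ≠ 0, the matrix exponential of ω^× is given by Rodrigues' formula: exp(ω^×) = I + (sin‖ω‖/‖ω‖) ω^× + ((1 - cos‖ω‖)/‖ω‖²) (ω^×)². -/
/-! If `a ^ 3 = -θ ^ 2 • a`, the odd powers of `a` are `(-θ ^ 2) ^ k • a` and the even powers past
the first are `(-θ ^ 2) ^ k • a ^ 2`. Splitting the exponential series of `a` into its even and odd
parts therefore leaves the scalar series of `(1 - cos θ) / θ ^ 2` and `sin θ / θ`. For `a = ω^×` the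
relation holds with `θ = ‖ω‖`. -/

open Matrix

open Nat

theorem Real.hasSum_sin_div {θ : ℝ} (hθ : θ ≠ 0) :
    HasSum (fun k : ℕ => ((2 * k + 1)! : ℝ)⁻¹ * (-θ ^ 2) ^ k) (Real.sin θ / θ) := by
  refine ((Real.hasSum_sin θ).div_const θ).congr_fun fun k => ?_
  rw [neg_pow, ← pow_mul, pow_succ]
  field_simp

theorem Real.hasSum_one_sub_cos_div_sq {θ : ℝ} (hθ : θ ≠ 0) :
    HasSum (fun k : ℕ => ((2 * k + 2)! : ℝ)⁻¹ * (-θ ^ 2) ^ k) ((1 - Real.cos θ) / θ ^ 2) := by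
  have htail := (hasSum_nat_add_iff' 1).mpr (Real.hasSum_cos θ)
  simp only [Finset.sum_range_one, pow_zero, mul_zero, factorial_zero, cast_one, div_one,
    mul_one] at htail
  rw [show (1 - Real.cos θ) / θ ^ 2 = (Real.cos θ - 1) / -θ ^ 2 by rw [div_neg, ← neg_div, neg_sub]]
  refine (htail.div_const _).congr_fun fun k => ?_
  rw [neg_pow, ← pow_mul, mul_add_one, pow_succ, pow_add]
  field_simp

section PowThree

variable {R A : Type*} [CommSemiring R] [Semiring A] [Algebra R A] {a : A} {c : R}

theorem pow_two_mul_add_one_of_pow_three_eq_smul (h : a ^ 3 = c • a) (k : ℕ) :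
    a ^ (2 * k + 1) = c ^ k • a := by
  induction k with
  | zero => simp
  | succ k ih =>
    rw [show 2 * (k + 1) + 1 = 2 + (2 * k + 1) by ring, pow_add, ih, mul_smul_comm,
      ← pow_succ, h, smul_smul, pow_succ]

theorem pow_two_mul_add_two_of_pow_three_eq_smul (h : a ^ 3 = c • a) (k : ℕ) :
    a ^ (2 * k + 2) = c ^ k • a ^ 2 := by
  rw [pow_succ, pow_two_mul_add_one_of_pow_three_eq_smul h, smul_mul_assoc, ← pow_two]

end PowThree

namespace NormedSpace

variable {𝔸 : Type*} [Ring 𝔸] [Algebra ℝ 𝔸] [TopologicalSpace 𝔸] [IsTopologicalRing 𝔸]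
  [ContinuousSMul ℝ 𝔸] [T2Space 𝔸]

theorem exp_eq_of_pow_three_eq_neg_sq_smul {a : 𝔸} {θ : ℝ} (hθ : θ ≠ 0)
    (ha : a ^ 3 = (-θ ^ 2) • a) :
    exp a = 1 + (Real.sin θ / θ) • a + ((1 - Real.cos θ) / θ ^ 2) • a ^ 2 := by
  have hodd : HasSum (fun k : ℕ => ((2 * k + 1)! : ℝ)⁻¹ • a ^ (2 * k + 1))
      ((Real.sin θ / θ) • a) := by
    refine ((Real.hasSum_sin_div hθ).smul_const a).congr_fun fun k => ?_
    rw [pow_two_mul_add_one_of_pow_three_eq_smul ha, smul_smul]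
  have heven_succ : HasSum (fun k : ℕ => ((2 * (k + 1))! : ℝ)⁻¹ • a ^ (2 * (k + 1)))
      (((1 - Real.cos θ) / θ ^ 2) • a ^ 2) := by
    refine ((Real.hasSum_one_sub_cos_div_sq hθ).smul_const (a ^ 2)).congr_fun fun k => ?_
    rw [mul_add_one, pow_two_mul_add_two_of_pow_three_eq_smul ha, smul_smul]
  have heven : HasSum (fun k : ℕ => ((2 * k)! : ℝ)⁻¹ • a ^ (2 * k))
      (1 + ((1 - Real.cos θ) / θ ^ 2) • a ^ 2) := by
    have h := HasSum.zero_add (f := fun k : ℕ => ((2 * k)! : ℝ)⁻¹ • a ^ (2 * k)) heven_succ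
    rwa [mul_zero, pow_zero, factorial_zero, cast_one, inv_one, one_smul] at h
  have hexp := HasSum.even_add_odd (f := fun n => (n ! : ℝ)⁻¹ • a ^ n) heven hodd
  rw [congrFun (exp_eq_tsum ℝ) a, hexp.tsum_eq]
  abel

end NormedSpace

theorem hat_pow_three (w : Fin 3 → ℝ) : hat w ^ 3 = (-(w ⬝ᵥ w)) • hat w := by
  ext i j
  fin_cases i <;> fin_cases j <;>
    simp [hat, pow_succ, Matrix.mul_apply, Fin.sum_univ_three, dotProduct] <;> ring

theorem enorm3_sq (w : Fin 3 → ℝ) : enorm3 w ^ 2 = w ⬝ᵥ w :=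
  Real.sq_sqrt (dotProduct_self_star_nonneg w)

theorem enorm3_ne_zero {w : Fin 3 → ℝ} (hw : w ≠ 0) : enorm3 w ≠ 0 := by
  rw [← pow_ne_zero_iff two_ne_zero, enorm3_sq]
  exact dotProduct_self_eq_zero.not.mpr hw

theorem rodrigues_formula (ω : Fin 3 → ℝ) (hω : ω ≠ 0) :
    NormedSpace.exp (hat ω) =
      1 + (Real.sin (enorm3 ω) / enorm3 ω) • hat ω
        + ((1 - Real.cos (enorm3 ω)) / (enorm3 ω) ^ 2) • (hat ω) ^ 2 :=
  NormedSpace.exp_eq_of_pow_three_eq_neg_sq_smul (enorm3_ne_zero hω)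
    (by rw [enorm3_sq, hat_pow_three])
end
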